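/- Let S be a measurable space and let 𝓡 : S → P(M(S)) be a probability kernel. For μ ∈ M*(S), define R_μ ∈ P(M*(S)) as the mixture R_μ(B) = ∫_S Φ_μ(s)(B) d(μ/μ(S))(s), where Φ_μ(s) is the pushforward of 𝓡_s under ν ↦ μ + ν. Then μ ↦ R_μ is measurable from M*(S) to P(M*(S)); that is, R_• is a probability kernel from M*(S) to itself. -/

import Mathlib

/-!
Normalising `μ` is a Markov kernel `M*(S) → S`, and `(μ, s) ↦ Φ_μ(s)` is a Markov kernel
`M*(S) × S → M*(S)`: it is the pushforward of the kernel `(μ, s) ↦ 𝓡_s` along the jointly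
measurable map `((μ, s), ν) ↦ μ + ν`. Then `R_μ` is the mixture of the second kernel over the
first, and such mixtures depend measurably on the parameter.
-/

open MeasureTheory

/-- `M*(S)`: the nonzero finite measures on `S`, with the σ-algebra induced by the
evaluation maps. -/
abbrev MStar (S : Type*) [MeasurableSpace S] := {μ : Measure S // IsFiniteMeasure μ ∧ μ ≠ 0}

/-- The map `ν ↦ μ + ν` from `M(S)` to `M*(S)`, for a fixed `μ ∈ M*(S)`. -/
noncomputable def addMeas {S : Type*} [MeasurableSpace S] (μ : MStar S)
    (ν : {ν : Measure S // IsFiniteMeasure ν}) : MStar S :=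
  ⟨μ.1 + ν.1,
    ⟨by have := μ.2.1; have := ν.2; infer_instance,
     by
      intro h
      have hle : μ.1 ≤ μ.1 + ν.1 := Measure.le_add_right le_rfl
      rw [h] at hle
      exact μ.2.2 (le_antisymm hle (Measure.zero_le _))⟩⟩

/-- `Φ_μ(s)`: the pushforward of `𝓡_s` under the map `ν ↦ μ + ν` from `M(S)` to
`M*(S)`. -/
noncomputable def Phi {S : Type*} [MeasurableSpace S]
    (𝓡 : S → Measure {ν : Measure S // IsFiniteMeasure ν}) (μ : MStar S) (s : S) :
    Measure (MStar S) :=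
  Measure.map (addMeas μ) (𝓡 s)

/-- One step of the measure-valued Pólya urn with random replacements given by the
probability kernel `𝓡 : S → P(M(S))`: `urnStepR 𝓡 μ` is the mixture
`B ↦ ∫_S Φ_μ(s)(B) d(μ/μ(S))(s)` of the measures `Φ_μ(s)` over `s ∼ μ/μ(S)`. -/
noncomputable def urnStepR {S : Type*} [MeasurableSpace S]
    (𝓡 : S → Measure {ν : Measure S // IsFiniteMeasure ν}) (μ : MStar S) :
    Measure (MStar S) :=
  Measure.bind ((μ.1 Set.univ)⁻¹ • μ.1) (Phi 𝓡 μ)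

open ProbabilityTheory Function

namespace ProbabilityTheory.Kernel

variable {α β γ : Type*} [MeasurableSpace α] [MeasurableSpace β] [MeasurableSpace γ]

theorem measurable_map_of_measurable_uncurry (κ : Kernel α β) [IsSFiniteKernel κ]
    {f : α → β → γ} (hf : Measurable (uncurry f)) :
    Measurable fun a => (κ a).map (f a) := by
  refine Measure.measurable_of_measurable_coe _ fun B hB => ?_
  convert measurable_kernel_prodMk_left (κ := κ) (hf hB) with a
  exact Measure.map_apply (hf.comp measurable_prodMk_left) hB

theorem measurable_bind_of_measurable_uncurry (κ : Kernel α β) [IsSFiniteKernel κ]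
    {g : α → β → Measure γ} (hg : Measurable (uncurry g)) :
    Measurable fun a => (κ a).bind (g a) := by
  refine Measure.measurable_of_measurable_coe _ fun B hB => ?_
  convert Measurable.lintegral_kernel_prod_right (κ := κ) (f := fun a b => g a b B)
    ((Measure.measurable_coe hB).comp hg) with a
  exact Measure.bind_apply hB (hg.comp measurable_prodMk_left).aemeasurable

end ProbabilityTheory.Kernel

section Urn

variable {S : Type*} [MeasurableSpace S]

theorem measurable_addMeas_uncurry : Measurable (uncurry (addMeas (S := S))) := by
  refine (Measure.measurable_of_measurable_coe _ fun A hA => ?_).subtype_mk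
  exact ((Measure.measurable_coe hA).comp (measurable_subtype_coe.comp measurable_fst)).add
    ((Measure.measurable_coe hA).comp (measurable_subtype_coe.comp measurable_snd))

variable (S) in
noncomputable def normalizedKernel : Kernel (MStar S) S where
  toFun μ := (μ.1 Set.univ)⁻¹ • μ.1
  measurable' := by
    refine Measure.measurable_of_measurable_coe _ fun A hA => ?_
    have hcoe {A : Set S} (hA : MeasurableSet A) : Measurable fun μ : MStar S => μ.1 A :=
      (Measure.measurable_coe hA).comp measurable_subtype_coe
    exact (hcoe MeasurableSet.univ).inv.mul (hcoe hA)

instance : IsMarkovKernel (normalizedKernel S) where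
  isProbabilityMeasure μ := by
    have : IsFiniteMeasure μ.1 := μ.2.1
    have : NeZero μ.1 := ⟨μ.2.2⟩
    exact isProbabilityMeasureSMul

theorem measurable_addMeas (μ : MStar S) : Measurable (addMeas μ) :=
  measurable_addMeas_uncurry.comp measurable_prodMk_left

theorem measurable_Phi_uncurry (𝓡 : Kernel S {ν : Measure S // IsFiniteMeasure ν})
    [IsSFiniteKernel 𝓡] : Measurable (uncurry (Phi 𝓡)) :=
  (Kernel.prodMkLeft (MStar S) 𝓡).measurable_map_of_measurable_uncurry
    (f := fun p => addMeas p.1)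
    (measurable_addMeas_uncurry.comp (measurable_fst.fst.prodMk measurable_snd))

end Urn

/-- Lemma LR of the paper: for a measurable space `S` and a
probability kernel `𝓡 : S → P(M(S))`, the map `μ ↦ R_μ` sending `μ ∈ M*(S)` to the
mixture over `s ∼ μ/μ(S)` of the pushforwards of `𝓡_s` under `ν ↦ μ + ν` takes
values in the probability measures on `M*(S)` and is measurable, i.e. it is a
probability kernel from `M*(S)` to itself. -/
theorem urnStepR_isProbabilityKernel (S : Type*) [MeasurableSpace S]
    (𝓡 : S → Measure {ν : Measure S // IsFiniteMeasure ν})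
    (hmeas : Measurable 𝓡) (hprob : ∀ s, IsProbabilityMeasure (𝓡 s)) :
    (∀ μ : MStar S, IsProbabilityMeasure (urnStepR 𝓡 μ)) ∧ Measurable (urnStepR 𝓡) := by
  let 𝓡κ : Kernel S {ν : Measure S // IsFiniteMeasure ν} := ⟨𝓡, hmeas⟩
  have : IsMarkovKernel 𝓡κ := ⟨hprob⟩
  have hPhi : Measurable (uncurry (Phi 𝓡)) := measurable_Phi_uncurry 𝓡κ
  refine ⟨fun μ => ?_, (normalizedKernel S).measurable_bind_of_measurable_uncurry hPhi⟩
  exact isProbabilityMeasure_bind (m := normalizedKernel S μ)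
    (hPhi.comp measurable_prodMk_left).aemeasurable
    (ae_of_all _ fun s => Measure.isProbabilityMeasure_map (measurable_addMeas μ).aemeasurable)
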